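/- Let 2 ≤ r, 2 ≤ c and max(r,c) ≤ v ≤ rc with 2v ≥ 2rc − c·min(r, c − 1). If there exists an (r × c, v)-near triple array, then for every integer i with 0 < i ≤ rc − v there exists an (r × c, v + i)-near triple array. -/

import Mathlib

open Finset

/-- An `r × c` row-column design on `v` symbols is binary if no symbol occurs
twice in any row or in any column. -/
def IsBinaryDesign {r c v : ℕ} (T : Fin r × Fin c → Fin v) : Prop :=
  (∀ (i : Fin r) (j j' : Fin c), j ≠ j' → T (i, j) ≠ T (i, j')) ∧
  (∀ (j : Fin c) (i i' : Fin r), i ≠ i' → T (i, j) ≠ T (i', j))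

/-- The replication number of a symbol `s`: the number of cells containing `s`. -/
def replNum {r c v : ℕ} (T : Fin r × Fin c → Fin v) (s : Fin v) : ℕ :=
  (Finset.univ.filter (fun p : Fin r × Fin c => T p = s)).card

/-- The average replication number `e = rc/v` as a rational number. -/
def avgRepl (r c v : ℕ) : ℚ := ((r : ℚ) * (c : ℚ)) / (v : ℚ)

/-- A design is equireplicate if `e = rc/v` is an integer and every symbol has
replication number `e`. -/
def IsEquireplicate {r c v : ℕ} (T : Fin r × Fin c → Fin v) : Prop :=
  (avgRepl r c v).den = 1 ∧ ∀ s : Fin v, (replNum T s : ℚ) = avgRepl r c v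

/-- A design is near equireplicate if `e = rc/v` is not an integer and every symbol
has replication number `⌊e⌋` or `⌈e⌉`. -/
def IsNearEquireplicate {r c v : ℕ} (T : Fin r × Fin c → Fin v) : Prop :=
  (avgRepl r c v).den ≠ 1 ∧
  ∀ s : Fin v, (replNum T s : ℤ) = ⌊avgRepl r c v⌋ ∨ (replNum T s : ℤ) = ⌈avgRepl r c v⌉

/-- The set of symbols occurring in row `i`. -/
def rowSet {r c v : ℕ} (T : Fin r × Fin c → Fin v) (i : Fin r) : Finset (Fin v) :=
  Finset.univ.image (fun j : Fin c => T (i, j))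

/-- The set of symbols occurring in column `j`. -/
def colSet {r c v : ℕ} (T : Fin r × Fin c → Fin v) (j : Fin c) : Finset (Fin v) :=
  Finset.univ.image (fun i : Fin r => T (i, j))

/-- Average row-column intersection size `λ_rc`. -/
def lamRC {r c v : ℕ} (T : Fin r × Fin c → Fin v) : ℚ :=
  (∑ i : Fin r, ∑ j : Fin c, ((rowSet T i ∩ colSet T j).card : ℚ)) / ((r : ℚ) * (c : ℚ))

/-- Average row-row intersection size `λ_rr`. -/
def lamRR {r c v : ℕ} (T : Fin r × Fin c → Fin v) : ℚ :=
  (∑ p ∈ Finset.univ.filter (fun p : Fin r × Fin r => p.1 < p.2),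
      ((rowSet T p.1 ∩ rowSet T p.2).card : ℚ)) / ((r : ℚ) * ((r : ℚ) - 1) / 2)

/-- Average column-column intersection size `λ_cc`. -/
def lamCC {r c v : ℕ} (T : Fin r × Fin c → Fin v) : ℚ :=
  (∑ p ∈ Finset.univ.filter (fun p : Fin c × Fin c => p.1 < p.2),
      ((colSet T p.1 ∩ colSet T p.2).card : ℚ)) / ((c : ℚ) * ((c : ℚ) - 1) / 2)

/-- An `(r × c, v)`-near triple array. -/
def IsNearTripleArray {r c v : ℕ} (T : Fin r × Fin c → Fin v) : Prop :=
  IsBinaryDesign T ∧ (IsEquireplicate T ∨ IsNearEquireplicate T) ∧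
  (∀ (i : Fin r) (j : Fin c),
    ((rowSet T i ∩ colSet T j).card : ℤ) = ⌊lamRC T⌋ ∨
    ((rowSet T i ∩ colSet T j).card : ℤ) = ⌈lamRC T⌉) ∧
  (∀ i j : Fin r, i ≠ j →
    ((rowSet T i ∩ rowSet T j).card : ℤ) = ⌊lamRR T⌋ ∨
    ((rowSet T i ∩ rowSet T j).card : ℤ) = ⌈lamRR T⌉) ∧
  (∀ i j : Fin c, i ≠ j →
    ((colSet T i ∩ colSet T j).card : ℤ) = ⌊lamCC T⌋ ∨
    ((colSet T i ∩ colSet T j).card : ℤ) = ⌈lamCC T⌉)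

/-!
The hypothesis gives `r c ≤ 2 v` and `2 (r c - v) ≤ c (c - 1)`, and both persist as `v` grows, so
it suffices to add one symbol when `v < r c`. Then every replication number `r_s` is `1` or `2`,
and counting incidences gives `Σ |R_i ∩ C_j| = Σ_s r_s² ≤ 2 r c` and
`Σ_{i<j} |C_i ∩ C_j| = Σ_s (r_s choose 2) = r c - v`. Hence `λ_rc ≤ 2` and `λ_cc ≤ 1`:
row-column intersections have size `1` or `2` and column intersections size `0` or `1`.

Choose two rows `a, a'` with a largest intersection `M ≥ 1`, a symbol `s` in it, occurring in
cells `(a, b)` and `(a', b')`, and write a new symbol into `(a', b')`. Merging the new symbol back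
into `s` is injective on every row and column, so no intersection grows, and the only row
intersection that can shrink is that of `a` and `a'`, which becomes `M - 1`. Hence replication
numbers stay in `{1, 2}`, row-column intersections in `{1, 2}`, row intersections in
`{M - 1, M}` and column intersections in `{0, 1}`. A family of naturals whose values differ by at
most one takes only the values `⌊mean⌋` and `⌈mean⌉`, so the new design is again a near triple
array.
-/

section Average

variable {α : Type*} [Field α] [LinearOrder α] [IsStrictOrderedRing α]

theorem abs_sub_average_lt_one {ι : Type*} {s : Finset ι} {f : ι → α}
    (h : ∀ x ∈ s, ∀ y ∈ s, f x ≤ f y + 1) {x : ι} (hx : x ∈ s) :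
    |f x - (∑ y ∈ s, f y) / #s| < 1 := by
  classical
  have hs : (0 : α) < #s := by exact_mod_cast card_pos.mpr ⟨x, hx⟩
  have bound : ∀ g : ι → α, g x = 0 → (∀ y ∈ s, g y ≤ 1) → (∑ y ∈ s, g y) / #s < 1 := by
    intro g hgx hg
    rw [div_lt_one hs, ← sum_erase s hgx]
    calc ∑ y ∈ s.erase x, g y ≤ #(s.erase x) := by
          simpa using sum_le_card_nsmul _ _ 1 fun y hy => hg y (mem_of_mem_erase hy)
      _ < #s := by exact_mod_cast card_erase_lt_of_mem hx
  have hmean : ∀ b : α, (∑ y ∈ s, (f y - b)) / #s = (∑ y ∈ s, f y) / #s - b := by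
    intro b
    rw [sum_sub_distrib, sum_const, nsmul_eq_mul]
    field_simp
  rw [abs_sub_lt_iff]
  constructor
  · have := bound (fun y => f x - f y) (sub_self _) fun y hy => by linarith [h x hx y hy]
    rw [← neg_neg (∑ y ∈ s, _), ← sum_neg_distrib] at this
    simp only [neg_sub, neg_div, hmean] at this
    linarith
  · have := bound (fun y => f y - f x) (sub_self _) fun y hy => by linarith [h y hy x hx]
    rwa [hmean] at this

variable [FloorRing α] {z n : ℤ} {a : α}

theorem Int.eq_floor_or_eq_ceil_of_abs_sub_lt_one (h : |(z : α) - a| < 1) : z = ⌊a⌋ ∨ z = ⌈a⌉ := by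
  rw [abs_sub_lt_iff] at h
  rcases le_or_gt (z : α) a with hza | hza
  · exact Or.inl (Int.floor_eq_iff.mpr ⟨hza, by linarith⟩).symm
  · exact Or.inr (Int.ceil_eq_iff.mpr ⟨by linarith, hza.le⟩).symm

theorem Int.le_of_le_of_eq_floor_or_eq_ceil (ha : (n : α) ≤ a) (h : z = ⌊a⌋ ∨ z = ⌈a⌉) :
    n ≤ z :=
  (Int.le_floor.mpr ha).trans (h.elim ge_of_eq fun h => h ▸ Int.floor_le_ceil a)

theorem Int.le_of_eq_floor_or_eq_ceil_of_le (h : z = ⌊a⌋ ∨ z = ⌈a⌉) (ha : a ≤ n) : z ≤ n :=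
  (h.elim (fun h => h ▸ Int.floor_le_ceil a) le_of_eq).trans (Int.ceil_le.mpr ha)

end Average

theorem sum_card_inter_eq_sum_card_filter {κ α : Type*} [Fintype α] [DecidableEq α]
    (P : Finset κ) (A B : κ → Finset α) :
    ∑ p ∈ P, #(A p ∩ B p) = ∑ x, #{p ∈ P | x ∈ A p ∧ x ∈ B p} := by
  have h : ∀ p, #(A p ∩ B p) = ∑ x, if x ∈ A p ∧ x ∈ B p then 1 else 0 := fun p => by
    rw [← card_filter]
    congr 1
    ext
    simp
  simp_rw [h, card_filter]
  exact sum_comm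

theorem card_inter_le_card_image_inter {α β : Type*} [DecidableEq α] [DecidableEq β] {f : α → β}
    {s : Finset α} (t : Finset α) (hf : Set.InjOn f s) :
    #(s ∩ t) ≤ #(s.image f ∩ t.image f) :=
  calc #(s ∩ t) = #((s ∩ t).image f) :=
        (card_image_of_injOn (hf.mono (coe_subset.mpr inter_subset_left))).symm
    _ ≤ #(s.image f ∩ t.image f) := card_le_card (image_inter_subset f s t)

theorem exists_max_card_inter {ι α : Type*} [Fintype ι] [DecidableEq ι] [DecidableEq α]
    {L : ι → Finset α} (h : ∃ i j, i ≠ j ∧ (L i ∩ L j).Nonempty) :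
    ∃ a a', a ≠ a' ∧ (L a ∩ L a').Nonempty ∧
      ∀ i j, i ≠ j → #(L i ∩ L j) ≤ #(L a ∩ L a') := by
  obtain ⟨i, j, hij, hne⟩ := h
  obtain ⟨⟨a, a'⟩, hmem, hmax⟩ := exists_max_image univ.offDiag (fun p => #(L p.1 ∩ L p.2))
    ⟨(i, j), by simpa using hij⟩
  refine ⟨a, a', by simpa using hmem, ?_, fun i j hij => hmax (i, j) (by simpa using hij)⟩
  exact card_pos.mp ((card_pos.mpr hne).trans_le (hmax (i, j) (by simpa using hij)))

section NearlyConstant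

variable {ι : Type*} {f : ι → ℕ}

def IsNearlyConstantOn (f : ι → ℕ) (s : Set ι) : Prop :=
  ∀ x ∈ s, ∀ y ∈ s, f x ≤ f y + 1

theorem IsNearlyConstantOn.mono {s t : Set ι} (h : IsNearlyConstantOn f t) (hst : s ⊆ t) :
    IsNearlyConstantOn f s :=
  fun x hx y hy => h x (hst hx) y (hst hy)

theorem IsNearlyConstantOn.of_le_of_le {s : Set ι} (k : ℕ) (h : ∀ x ∈ s, k ≤ f x ∧ f x ≤ k + 1) :
    IsNearlyConstantOn f s :=
  fun x hx y hy => by have := h x hx; have := h y hy; omega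

theorem IsNearlyConstantOn.of_eq_floor_or_eq_ceil {s : Set ι} (a : ℚ)
    (h : ∀ x ∈ s, (f x : ℤ) = ⌊a⌋ ∨ (f x : ℤ) = ⌈a⌉) : IsNearlyConstantOn f s := by
  intro x hx y hy
  have := Int.floor_le_ceil a
  have := Int.ceil_le_floor_add_one a
  rcases h x hx with hx | hx <;> rcases h y hy with hy | hy <;> omega

theorem IsNearlyConstantOn.eq_floor_or_eq_ceil {s : Finset ι} (h : IsNearlyConstantOn f s)
    {x : ι} (hx : x ∈ s) :
    (f x : ℤ) = ⌊(∑ y ∈ s, (f y : ℚ)) / #s⌋ ∨ (f x : ℤ) = ⌈(∑ y ∈ s, (f y : ℚ)) / #s⌉ := by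
  apply Int.eq_floor_or_eq_ceil_of_abs_sub_lt_one
  rw [Int.cast_natCast]
  refine abs_sub_average_lt_one (f := fun y => (f y : ℚ)) (fun x hx y hy => ?_) hx
  exact_mod_cast (h x hx y hy : f x ≤ f y + 1)

theorem IsNearlyConstantOn.eq_average_of_den_eq_one {s : Finset ι} (h : IsNearlyConstantOn f s)
    {x : ι} (hx : x ∈ s) (hden : ((∑ y ∈ s, (f y : ℚ)) / #s).den = 1) :
    (f x : ℚ) = (∑ y ∈ s, (f y : ℚ)) / #s := by
  have hnum := Rat.coe_int_num_of_den_eq_one hden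
  rcases h.eq_floor_or_eq_ceil hx with e | e <;>
  · rw [← hnum] at e ⊢
    simp only [Int.floor_intCast, Int.ceil_intCast] at e
    exact_mod_cast e

end NearlyConstant

section Averages

variable {r c v : ℕ}

theorem sum_replNum (T : Fin r × Fin c → Fin v) : ∑ s, replNum T s = r * c := by
  simpa [replNum] using (card_eq_sum_card_fiberwise (f := T) (s := univ) (t := univ)
    fun _ _ => mem_univ _).symm

theorem avgRepl_eq_average (T : Fin r × Fin c → Fin v) :
    avgRepl r c v = (∑ s, (replNum T s : ℚ)) / #(univ : Finset (Fin v)) := by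
  rw [avgRepl, ← Nat.cast_sum, sum_replNum, card_univ, Fintype.card_fin, Nat.cast_mul]

theorem replNum_eq_floor_or_eq_ceil {T : Fin r × Fin c → Fin v}
    (h : IsEquireplicate T ∨ IsNearEquireplicate T) (s : Fin v) :
    (replNum T s : ℤ) = ⌊avgRepl r c v⌋ ∨ (replNum T s : ℤ) = ⌈avgRepl r c v⌉ := by
  rcases h with ⟨-, h⟩ | ⟨-, h⟩
  · left
    rw [← h s, Int.floor_natCast]
  · exact h s

theorem isEquireplicate_or_isNearEquireplicate {T : Fin r × Fin c → Fin v}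
    (h : IsNearlyConstantOn (replNum T) Set.univ) :
    IsEquireplicate T ∨ IsNearEquireplicate T := by
  replace h := h.mono (Set.subset_univ ↑(univ : Finset (Fin v)))
  rw [IsEquireplicate, IsNearEquireplicate, avgRepl_eq_average T]
  by_cases hden : ((∑ s, (replNum T s : ℚ)) / #(univ : Finset (Fin v))).den = 1
  · exact Or.inl ⟨hden, fun s => h.eq_average_of_den_eq_one (mem_univ s) hden⟩
  · exact Or.inr ⟨hden, fun s => h.eq_floor_or_eq_ceil (mem_univ s)⟩

theorem lamRC_eq_average (T : Fin r × Fin c → Fin v) :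
    lamRC T = (∑ p : Fin r × Fin c, (#(rowSet T p.1 ∩ colSet T p.2) : ℚ)) /
      #(univ : Finset (Fin r × Fin c)) := by
  rw [lamRC, Fintype.sum_prod_type, card_univ, Fintype.card_prod, Fintype.card_fin,
    Fintype.card_fin, Nat.cast_mul]

theorem IsNearlyConstantOn.card_inter_eq_floor_or_eq_ceil {α : Type*} [DecidableEq α] {n : ℕ}
    {L : Fin n → Finset α}
    (h : IsNearlyConstantOn (fun p : Fin n × Fin n => #(L p.1 ∩ L p.2)) {p | p.1 ≠ p.2})
    {i j : Fin n} (hij : i ≠ j) :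
    (#(L i ∩ L j) : ℤ) = ⌊(∑ p ∈ univ.filter (fun p : Fin n × Fin n => p.1 < p.2),
        (#(L p.1 ∩ L p.2) : ℚ)) / ((n : ℚ) * ((n : ℚ) - 1) / 2)⌋ ∨
      (#(L i ∩ L j) : ℤ) = ⌈(∑ p ∈ univ.filter (fun p : Fin n × Fin n => p.1 < p.2),
        (#(L p.1 ∩ L p.2) : ℚ)) / ((n : ℚ) * ((n : ℚ) - 1) / 2)⌉ := by
  have hcard : #(univ.filter fun p : Fin n × Fin n => p.1 < p.2) = n.choose 2 := by
    simpa using Fintype.card_product_filter_lt (α := Fin n)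
  rw [← Nat.cast_choose_two, ← hcard]
  replace h := h.mono (s := ↑(univ.filter fun p : Fin n × Fin n => p.1 < p.2))
    fun p hp => (mem_filter.mp hp).2.ne
  rcases hij.lt_or_gt with hlt | hlt
  · exact h.eq_floor_or_eq_ceil (x := (i, j)) (mem_filter.mpr ⟨mem_univ _, hlt⟩)
  · rw [inter_comm]
    exact h.eq_floor_or_eq_ceil (x := (j, i)) (mem_filter.mpr ⟨mem_univ _, hlt⟩)

theorem isNearTripleArray_of_isNearlyConstantOn {T : Fin r × Fin c → Fin v}
    (hb : IsBinaryDesign T) (hrep : IsNearlyConstantOn (replNum T) Set.univ)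
    (hrc : IsNearlyConstantOn (fun p : Fin r × Fin c => #(rowSet T p.1 ∩ colSet T p.2)) Set.univ)
    (hrr : IsNearlyConstantOn (fun p : Fin r × Fin r => #(rowSet T p.1 ∩ rowSet T p.2))
      {p | p.1 ≠ p.2})
    (hcc : IsNearlyConstantOn (fun p : Fin c × Fin c => #(colSet T p.1 ∩ colSet T p.2))
      {p | p.1 ≠ p.2}) :
    IsNearTripleArray T := by
  refine ⟨hb, isEquireplicate_or_isNearEquireplicate hrep, fun i j => ?_,
    fun i j => hrr.card_inter_eq_floor_or_eq_ceil, fun i j => hcc.card_inter_eq_floor_or_eq_ceil⟩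
  rw [lamRC_eq_average]
  exact (hrc.mono (Set.subset_univ _)).eq_floor_or_eq_ceil (x := (i, j)) (mem_univ _)

end Averages

namespace IsBinaryDesign

variable {r c v : ℕ} {T : Fin r × Fin c → Fin v}

theorem card_filter_mem_rowSet (hb : IsBinaryDesign T) (s : Fin v) :
    #{i | s ∈ rowSet T i} = replNum T s := by
  rw [replNum, ← card_image_of_injOn (f := Prod.fst)]
  · congr 1
    ext i
    simp [rowSet]
  · rintro ⟨i, j⟩ hp ⟨i', j'⟩ hp' (rfl : i = i')
    simp only [coe_filter, mem_univ, true_and, Set.mem_ofPred_eq] at hp hp'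
    by_contra hne
    exact hb.1 i j j' (fun h => hne (h ▸ rfl)) (hp.trans hp'.symm)

theorem card_filter_mem_colSet (hb : IsBinaryDesign T) (s : Fin v) :
    #{j | s ∈ colSet T j} = replNum T s := by
  rw [replNum, ← card_image_of_injOn (f := Prod.snd)]
  · congr 1
    ext j
    simp [colSet]
  · rintro ⟨i, j⟩ hp ⟨i', j'⟩ hp' (rfl : j = j')
    simp only [coe_filter, mem_univ, true_and, Set.mem_ofPred_eq] at hp hp'
    by_contra hne
    exact hb.2 j i i' (fun h => hne (h ▸ rfl)) (hp.trans hp'.symm)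

theorem sum_card_rowSet_inter_colSet (hb : IsBinaryDesign T) :
    ∑ p : Fin r × Fin c, #(rowSet T p.1 ∩ colSet T p.2) = ∑ s, replNum T s ^ 2 := by
  rw [sum_card_inter_eq_sum_card_filter]
  refine sum_congr rfl fun s _ => ?_
  rw [← univ_product_univ, filter_product (fun i => s ∈ rowSet T i) (fun j => s ∈ colSet T j),
    card_product, hb.card_filter_mem_rowSet, hb.card_filter_mem_colSet, sq]

theorem sum_card_colSet_inter_colSet (hb : IsBinaryDesign T) :
    ∑ p ∈ univ.filter (fun p : Fin c × Fin c => p.1 < p.2), #(colSet T p.1 ∩ colSet T p.2) =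
      ∑ s, (replNum T s).choose 2 := by
  rw [sum_card_inter_eq_sum_card_filter]
  refine sum_congr rfl fun s _ => ?_
  rw [← hb.card_filter_mem_colSet, ← card_product_filter_lt]
  congr 1
  ext p
  simp only [mem_filter, mem_univ, true_and, mem_product]
  tauto

theorem exists_mem_rowSet_inter (hb : IsBinaryDesign T) {s : Fin v} (hs : replNum T s = 2) :
    ∃ i j, i ≠ j ∧ s ∈ rowSet T i ∩ rowSet T j := by
  rw [← hb.card_filter_mem_rowSet, card_eq_two] at hs
  obtain ⟨i, j, hij, hK⟩ := hs
  have hi : i ∈ ({i, j} : Finset (Fin r)) := mem_insert_self i {j}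
  have hj : j ∈ ({i, j} : Finset (Fin r)) := mem_insert_of_mem (mem_singleton_self j)
  rw [← hK, mem_filter] at hi hj
  exact ⟨i, j, hij, mem_inter.mpr ⟨hi.2, hj.2⟩⟩

theorem card_rowSet_inter_eq_of_mem (hb : IsBinaryDesign T) {s : Fin v} (hs : replNum T s ≤ 2)
    {a a' i j : Fin r} (haa' : a ≠ a') (ha : s ∈ rowSet T a ∩ rowSet T a') (hij : i ≠ j)
    (hi : s ∈ rowSet T i ∩ rowSet T j) :
    #(rowSet T i ∩ rowSet T j) = #(rowSet T a ∩ rowSet T a') := by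
  rw [mem_inter] at ha hi
  have hK : ({i | s ∈ rowSet T i} : Finset (Fin r)) = {a, a'} := by
    refine (eq_of_subset_of_card_le ?_ ?_).symm
    · intro k hk
      rcases mem_insert.mp hk with rfl | hk
      · exact mem_filter.mpr ⟨mem_univ _, ha.1⟩
      · exact mem_filter.mpr ⟨mem_univ _, (mem_singleton.mp hk) ▸ ha.2⟩
    · rwa [card_pair haa', hb.card_filter_mem_rowSet]
  have hi' : i ∈ ({a, a'} : Finset (Fin r)) := hK ▸ mem_filter.mpr ⟨mem_univ _, hi.1⟩
  have hj' : j ∈ ({a, a'} : Finset (Fin r)) := hK ▸ mem_filter.mpr ⟨mem_univ _, hi.2⟩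
  simp only [mem_insert, mem_singleton] at hi' hj'
  rcases hi' with rfl | rfl <;> rcases hj' with rfl | rfl
  all_goals first | exact absurd rfl hij | rfl | rw [inter_comm]

end IsBinaryDesign

namespace IsNearTripleArray

variable {r c v : ℕ} {T : Fin r × Fin c → Fin v}

theorem replNum_eq_one_or_two (hT : IsNearTripleArray T) (h₁ : v ≤ r * c) (h₂ : r * c ≤ 2 * v)
    (s : Fin v) : replNum T s = 1 ∨ replNum T s = 2 := by
  have hv : (0 : ℚ) < v := by exact_mod_cast s.pos
  have h := replNum_eq_floor_or_eq_ceil hT.2.1 s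
  have hlo := Int.le_of_le_of_eq_floor_or_eq_ceil (n := 1) (by
    rw [avgRepl, Int.cast_one, le_div_iff₀ hv, one_mul]; exact_mod_cast h₁) h
  have hhi := Int.le_of_eq_floor_or_eq_ceil_of_le (n := 2) h (by
    rw [avgRepl, Int.cast_ofNat, div_le_iff₀ hv]; exact_mod_cast h₂)
  omega

theorem card_rowSet_inter_colSet_le_two (hT : IsNearTripleArray T) (hrep : ∀ s, replNum T s ≤ 2)
    (i : Fin r) (j : Fin c) : #(rowSet T i ∩ colSet T j) ≤ 2 := by
  have hsum : ∑ p : Fin r × Fin c, #(rowSet T p.1 ∩ colSet T p.2) ≤ 2 * r * c := by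
    rw [hT.1.sum_card_rowSet_inter_colSet, mul_assoc, ← sum_replNum T, mul_sum]
    exact sum_le_sum fun s _ => by rw [sq]; exact Nat.mul_le_mul_right _ (hrep s)
  have hlam : lamRC T ≤ (2 : ℤ) := by
    rw [lamRC_eq_average, card_univ, Fintype.card_prod, Fintype.card_fin, Fintype.card_fin]
    refine div_le_of_le_mul₀ (by positivity) (by norm_num) ?_
    exact_mod_cast hsum.trans_eq (by ring)
  exact_mod_cast Int.le_of_eq_floor_or_eq_ceil_of_le (hT.2.2.1 i j) hlam

theorem card_colSet_inter_colSet_le_one (hT : IsNearTripleArray T)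
    (hrep : ∀ s, replNum T s = 1 ∨ replNum T s = 2) (hcc : 2 * (r * c - v) ≤ c * (c - 1))
    {i j : Fin c} (hij : i ≠ j) : #(colSet T i ∩ colSet T j) ≤ 1 := by
  have hsum : ∑ p ∈ univ.filter (fun p : Fin c × Fin c => p.1 < p.2),
      #(colSet T p.1 ∩ colSet T p.2) ≤ c.choose 2 := by
    rw [hT.1.sum_card_colSet_inter_colSet, Nat.choose_two_right]
    have hchoose : ∀ s, (replNum T s).choose 2 = replNum T s - 1 := fun s => by
      rcases hrep s with h | h <;> simp [h]
    have hsub : ∑ s, (replNum T s - 1) = r * c - v := by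
      rw [sum_tsub_distrib _ fun s _ => (hrep s).elim ge_of_eq (fun h => by omega), sum_replNum]
      simp
    simp only [hchoose, hsub]
    omega
  have hlam : lamCC T ≤ (1 : ℤ) := by
    rw [lamCC, ← Nat.cast_choose_two, Int.cast_one]
    refine div_le_one_of_le₀ ?_ (Nat.cast_nonneg _)
    exact_mod_cast hsum
  exact_mod_cast Int.le_of_eq_floor_or_eq_ceil_of_le (hT.2.2.2.2 i j hij) hlam

end IsNearTripleArray

section Merge

variable {r c v w : ℕ}

theorem rowSet_comp (φ : Fin w → Fin v) (T : Fin r × Fin c → Fin w) (i : Fin r) :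
    rowSet (φ ∘ T) i = (rowSet T i).image φ := by
  simp only [rowSet, image_image]
  rfl

theorem colSet_comp (φ : Fin w → Fin v) (T : Fin r × Fin c → Fin w) (j : Fin c) :
    colSet (φ ∘ T) j = (colSet T j).image φ := by
  simp only [colSet, image_image]
  rfl

theorem replNum_le_replNum_comp (φ : Fin w → Fin v) (T : Fin r × Fin c → Fin w) (x : Fin w) :
    replNum T x ≤ replNum (φ ∘ T) (φ x) :=
  card_le_card fun p hp => by
    simp only [mem_filter, mem_univ, true_and, Function.comp_apply] at hp ⊢
    rw [hp]

namespace IsBinaryDesign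

variable {φ : Fin w → Fin v} {T : Fin r × Fin c → Fin w}

theorem of_comp (h : IsBinaryDesign (φ ∘ T)) : IsBinaryDesign T :=
  ⟨fun i _ _ hj e => h.1 i _ _ hj (congrArg φ e), fun j _ _ hi e => h.2 j _ _ hi (congrArg φ e)⟩

theorem injOn_rowSet (h : IsBinaryDesign (φ ∘ T)) (i : Fin r) : Set.InjOn φ (rowSet T i) := by
  intro x hx y hy e
  obtain ⟨j, -, rfl⟩ := mem_image.mp hx
  obtain ⟨j', -, rfl⟩ := mem_image.mp hy
  by_contra hne
  exact h.1 i j j' (fun h => hne (h ▸ rfl)) e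

theorem injOn_colSet (h : IsBinaryDesign (φ ∘ T)) (j : Fin c) : Set.InjOn φ (colSet T j) := by
  intro x hx y hy e
  obtain ⟨i, -, rfl⟩ := mem_image.mp hx
  obtain ⟨i', -, rfl⟩ := mem_image.mp hy
  by_contra hne
  exact h.2 j i i' (fun h => hne (h ▸ rfl)) e

theorem card_rowSet_inter_colSet_le_comp (h : IsBinaryDesign (φ ∘ T)) (i : Fin r) (j : Fin c) :
    #(rowSet T i ∩ colSet T j) ≤ #(rowSet (φ ∘ T) i ∩ colSet (φ ∘ T) j) := by
  rw [rowSet_comp, colSet_comp]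
  exact card_inter_le_card_image_inter _ (h.injOn_rowSet i)

theorem card_rowSet_inter_rowSet_le_comp (h : IsBinaryDesign (φ ∘ T)) (i j : Fin r) :
    #(rowSet T i ∩ rowSet T j) ≤ #(rowSet (φ ∘ T) i ∩ rowSet (φ ∘ T) j) := by
  rw [rowSet_comp, rowSet_comp]
  exact card_inter_le_card_image_inter _ (h.injOn_rowSet i)

theorem card_colSet_inter_colSet_le_comp (h : IsBinaryDesign (φ ∘ T)) (i j : Fin c) :
    #(colSet T i ∩ colSet T j) ≤ #(colSet (φ ∘ T) i ∩ colSet (φ ∘ T) j) := by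
  rw [colSet_comp, colSet_comp]
  exact card_inter_le_card_image_inter _ (h.injOn_colSet i)

end IsBinaryDesign

end Merge

section AddSymbol

variable {r c v : ℕ}

def addSymbolAt (T : Fin r × Fin c → Fin v) (p : Fin r × Fin c) : Fin r × Fin c → Fin (v + 1) :=
  Function.update (Fin.castSucc ∘ T) p (Fin.last v)

theorem lastCases_comp_addSymbolAt (T : Fin r × Fin c → Fin v) (p : Fin r × Fin c) :
    (Fin.lastCases (T p) id : Fin (v + 1) → Fin v) ∘ addSymbolAt T p = T := by
  funext q
  by_cases h : q = p
  · subst h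
    simp [addSymbolAt]
  · simp [addSymbolAt, h]

theorem addSymbolAt_surjective {T : Fin r × Fin c → Fin v} (hT : Function.Surjective T)
    {p q : Fin r × Fin c} (hqp : q ≠ p) (hq : T q = T p) :
    Function.Surjective (addSymbolAt T p) := by
  intro x
  induction x using Fin.lastCases with
  | last => exact ⟨p, by simp [addSymbolAt]⟩
  | cast s =>
    obtain ⟨q', rfl⟩ := hT s
    by_cases h : q' = p
    · exact ⟨q, by simp [addSymbolAt, hqp, hq, h]⟩
    · exact ⟨q', by simp [addSymbolAt, h]⟩

theorem card_rowSet_inter_erase_le_addSymbolAt (T : Fin r × Fin c → Fin v) (p : Fin r × Fin c)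
    (i j : Fin r) :
    #((rowSet T i ∩ rowSet T j).erase (T p)) ≤
      #(rowSet (addSymbolAt T p) i ∩ rowSet (addSymbolAt T p) j) := by
  have hsub : ∀ k, ((rowSet T k).erase (T p)).image Fin.castSucc ⊆ rowSet (addSymbolAt T p) k := by
    intro k x hx
    simp only [rowSet, mem_image, mem_erase, mem_univ, true_and] at hx ⊢
    obtain ⟨_, ⟨hne, l, rfl⟩, rfl⟩ := hx
    have hkl : (k, l) ≠ p := fun h => hne (h ▸ rfl)
    exact ⟨l, by simp [addSymbolAt, hkl]⟩
  have herase : (rowSet T i ∩ rowSet T j).erase (T p) =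
      (rowSet T i).erase (T p) ∩ (rowSet T j).erase (T p) := by
    ext
    simp only [mem_erase, mem_inter]
    tauto
  calc #((rowSet T i ∩ rowSet T j).erase (T p))
      = #(((rowSet T i).erase (T p) ∩ (rowSet T j).erase (T p)).image Fin.castSucc) := by
        rw [card_image_of_injective _ (Fin.castSucc_injective v), herase]
    _ ≤ #(((rowSet T i).erase (T p)).image Fin.castSucc ∩
          ((rowSet T j).erase (T p)).image Fin.castSucc) :=
        card_le_card (image_inter_subset _ _ _)
    _ ≤ _ := card_le_card (inter_subset_inter (hsub i) (hsub j))

end AddSymbol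

section Step

variable {r c v : ℕ} {T : Fin r × Fin c → Fin v}

theorem le_card_rowSet_addSymbolAt_inter (hb : IsBinaryDesign T)
    (hrr : IsNearlyConstantOn (fun p : Fin r × Fin r => #(rowSet T p.1 ∩ rowSet T p.2))
      {p | p.1 ≠ p.2})
    {a a' : Fin r} {b' : Fin c} (haa' : a ≠ a') (hs : T (a', b') ∈ rowSet T a ∩ rowSet T a')
    (hrep : replNum T (T (a', b')) ≤ 2) {i j : Fin r} (hij : i ≠ j) :
    #(rowSet T a ∩ rowSet T a') - 1 ≤
      #(rowSet (addSymbolAt T (a', b')) i ∩ rowSet (addSymbolAt T (a', b')) j) := by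
  refine le_trans ?_ (card_rowSet_inter_erase_le_addSymbolAt T (a', b') i j)
  by_cases hmem : T (a', b') ∈ rowSet T i ∩ rowSet T j
  · rw [card_erase_of_mem hmem, hb.card_rowSet_inter_eq_of_mem hrep haa' hs hij hmem]
  · have := hrr (a, a') haa' (i, j) hij
    rw [erase_eq_of_notMem hmem]
    dsimp only at this
    omega

theorem isNearTripleArray_addSymbolAt (hb : IsBinaryDesign T)
    (hrep : ∀ s, replNum T s = 1 ∨ replNum T s = 2)
    (hrc : ∀ i j, #(rowSet T i ∩ colSet T j) ≤ 2)
    (hrr : IsNearlyConstantOn (fun p : Fin r × Fin r => #(rowSet T p.1 ∩ rowSet T p.2))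
      {p | p.1 ≠ p.2})
    (hcc : ∀ i j, i ≠ j → #(colSet T i ∩ colSet T j) ≤ 1)
    {a a' : Fin r} {b b' : Fin c} (haa' : a ≠ a')
    (hmax : ∀ i j, i ≠ j → #(rowSet T i ∩ rowSet T j) ≤ #(rowSet T a ∩ rowSet T a'))
    (hab : T (a, b) = T (a', b')) :
    IsNearTripleArray (addSymbolAt T (a', b')) := by
  set T' := addSymbolAt T (a', b')
  set φ : Fin (v + 1) → Fin v := Fin.lastCases (T (a', b')) id
  have hφ : φ ∘ T' = T := lastCases_comp_addSymbolAt T (a', b')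
  have hb' : IsBinaryDesign (φ ∘ T') := hφ ▸ hb
  have hrep_le : ∀ s, replNum T s ≤ 2 := fun s => by rcases hrep s with h | h <;> omega
  have hsurj : Function.Surjective T' := by
    refine addSymbolAt_surjective (fun s => ?_) (fun h => haa' (congrArg Prod.fst h)) hab
    have hpos : 0 < replNum T s := by rcases hrep s with h | h <;> omega
    obtain ⟨q, hq⟩ := card_pos.mp hpos
    exact ⟨q, (mem_filter.mp hq).2⟩
  have hs : T (a', b') ∈ rowSet T a ∩ rowSet T a' :=
    mem_inter.mpr ⟨hab ▸ mem_image_of_mem _ (mem_univ b), mem_image_of_mem _ (mem_univ b')⟩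
  refine isNearTripleArray_of_isNearlyConstantOn hb'.of_comp
    (IsNearlyConstantOn.of_le_of_le 1 fun x _ => ⟨?_, ?_⟩)
    (IsNearlyConstantOn.of_le_of_le 1 fun p _ => ⟨?_, ?_⟩)
    (IsNearlyConstantOn.of_le_of_le _ fun p hp =>
      ⟨le_card_rowSet_addSymbolAt_inter hb hrr haa' hs (hrep_le _) hp, ?_⟩)
    (IsNearlyConstantOn.of_le_of_le 0 fun p hp => ⟨Nat.zero_le _, ?_⟩)
  · obtain ⟨q, rfl⟩ := hsurj x
    exact card_pos.mpr ⟨q, mem_filter.mpr ⟨mem_univ _, rfl⟩⟩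
  · exact (hφ ▸ replNum_le_replNum_comp φ T' x).trans (hrep_le _)
  · exact card_pos.mpr ⟨T' p, mem_inter.mpr ⟨mem_image_of_mem _ (mem_univ p.2),
      mem_image_of_mem _ (mem_univ p.1)⟩⟩
  · exact (hφ ▸ hb'.card_rowSet_inter_colSet_le_comp p.1 p.2).trans (hrc p.1 p.2)
  · exact (hφ ▸ hb'.card_rowSet_inter_rowSet_le_comp p.1 p.2).trans
      ((hmax p.1 p.2 hp).trans (by omega))
  · exact (hφ ▸ hb'.card_colSet_inter_colSet_le_comp p.1 p.2).trans (hcc p.1 p.2 hp)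

end Step

theorem IsNearTripleArray.exists_succ {r c v : ℕ} {T : Fin r × Fin c → Fin v}
    (hT : IsNearTripleArray T) (hlt : v < r * c) (hle : r * c ≤ 2 * v)
    (hcc : 2 * (r * c - v) ≤ c * (c - 1)) :
    ∃ T' : Fin r × Fin c → Fin (v + 1), IsNearTripleArray T' := by
  have hrep := hT.replNum_eq_one_or_two hlt.le hle
  obtain ⟨s, hs⟩ : ∃ s, replNum T s = 2 := by
    by_contra! h
    have hsum : ∑ s, replNum T s = ∑ _s : Fin v, 1 :=
      sum_congr rfl fun s _ => (hrep s).resolve_right (h s)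
    rw [sum_replNum, sum_const, card_univ, Fintype.card_fin, smul_eq_mul, mul_one] at hsum
    omega
  obtain ⟨i, j, hij, hsij⟩ := hT.1.exists_mem_rowSet_inter hs
  obtain ⟨a, a', haa', ⟨s', hs'⟩, hmax⟩ := exists_max_card_inter ⟨i, j, hij, s, hsij⟩
  obtain ⟨b, -, hb⟩ := mem_image.mp (mem_inter.mp hs').1
  obtain ⟨b', -, hb'⟩ := mem_image.mp (mem_inter.mp hs').2
  refine ⟨addSymbolAt T (a', b'), isNearTripleArray_addSymbolAt hT.1 hrep
    (hT.card_rowSet_inter_colSet_le_two fun s => by rcases hrep s with h | h <;> omega)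
    (IsNearlyConstantOn.of_eq_floor_or_eq_ceil (lamRR T) fun p hp => hT.2.2.2.1 p.1 p.2 hp)
    (fun i j => hT.card_colSet_inter_colSet_le_one hrep hcc) haa' hmax (hb.trans hb'.symm)⟩

theorem nearTripleArray_increase_symbols_general {r c v : ℕ}
    (hcond : 2 * r * c - c * min r (c - 1) ≤ 2 * v)
    (hex : ∃ T : Fin r × Fin c → Fin v, IsNearTripleArray T) :
    ∀ i : ℕ, 0 < i → i ≤ r * c - v →
      ∃ T' : Fin r × Fin c → Fin (v + i), IsNearTripleArray T' := by
  have hmin_rc : c * min r (c - 1) ≤ r * c := by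
    rw [mul_comm r]
    exact Nat.mul_le_mul_left c (min_le_left _ _)
  have hmin_cc : c * min r (c - 1) ≤ c * (c - 1) := Nat.mul_le_mul_left c (min_le_right _ _)
  rw [mul_assoc] at hcond
  rintro i - hi
  induction i with
  | zero => exact hex
  | succ k ih =>
    obtain ⟨T, hT⟩ := ih (by omega)
    exact hT.exists_succ (by omega) (by omega) (by omega)

/-- If `2v ≥ 2rc − c·min(r, c−1)` and an `(r × c, v)`-near triple array
exists, then for each `0 < i ≤ rc − v` an `(r × c, v + i)`-near triple array exists. -/
theorem nearTripleArray_increase_symbols {r c v : ℕ} (hr : 2 ≤ r) (hc : 2 ≤ c)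
    (hv1 : max r c ≤ v) (hv2 : v ≤ r * c)
    (hcond : 2 * r * c - c * min r (c - 1) ≤ 2 * v)
    (hex : ∃ T : Fin r × Fin c → Fin v, IsNearTripleArray T) :
    ∀ i : ℕ, 0 < i → i ≤ r * c - v →
      ∃ T' : Fin r × Fin c → Fin (v + i), IsNearTripleArray T' :=
  nearTripleArray_increase_symbols_general hcond hex
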